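/- For every integer K ≥ 1 and every real ε ∈ (0, 1/(2K)), there exist integers N₁, N₂ ≥ 5 and J with 1 ≤ J ≤ K(N₁+N₂) (depending on ε and K) such that: (i) Q_N(𝐕_{K,N₁,N₂}, H_{K,N₁,N₂}) < 1 − 1/(2K) < 1 − ε < Q_N(𝐔_{K,N₁,N₂,J}, H_{K,N₁,N₂}), and (ii) the Jaccard similarity satisfies S(𝐕_{K,N₁,N₂}, 𝐔_{K,N₁,N₂,J}) < ε. -/

import Mathlib

open scoped Classical

noncomputable section

namespace BadComm

variable {V : Type*} [Fintype V]

/-- The finset of edges of a simple graph `G`. -/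
def edgeFin (G : SimpleGraph V) : Finset (Sym2 V) :=
  Finset.univ.filter (fun e => e ∈ G.edgeSet)

/-- The number of edges `m` of `G`. -/
def numEdges (G : SimpleGraph V) : ℕ := (edgeFin G).card

/-- The degree of a node. -/
def deg (G : SimpleGraph V) (v : V) : ℕ := (Finset.univ.filter (fun w => G.Adj v w)).card

/-- A clustering is encoded as a labelling `c : V → ℕ`; cluster `k` is the set of nodes
with label `k`.  `clusterDeg G c k` is the total degree of cluster `k`. -/
def clusterDeg (G : SimpleGraph V) (c : V → ℕ) (k : ℕ) : ℕ :=
  ∑ v ∈ Finset.univ.filter (fun v => c v = k), deg G v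

/-- An unordered pair is intracluster when all of its members carry the same label. -/
def sameCluster (c : V → ℕ) (p : Sym2 V) : Prop :=
  ∀ u ∈ p, ∀ v ∈ p, c u = c v

/-- The number of intracluster edges, `∑ₖ |Eₖ|`. -/
def intraEdges (G : SimpleGraph V) (c : V → ℕ) : ℕ :=
  ((edgeFin G).filter (fun e => sameCluster c e)).card

/-- The number of extracluster edges. -/
def extraEdges (G : SimpleGraph V) (c : V → ℕ) : ℕ :=
  ((edgeFin G).filter (fun e => ¬ sameCluster c e)).card

/-- The intracluster edge fraction `Q_f = (∑ₖ |Eₖ|)/m`. -/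
def Qf (G : SimpleGraph V) (c : V → ℕ) : ℝ := (intraEdges G c : ℝ) / (numEdges G : ℝ)

/-- The null-model term `Q_0 = ∑ₖ (deg(Vₖ)/(2m))²` (summed over the nonempty clusters). -/
def Q0 (G : SimpleGraph V) (c : V → ℕ) : ℝ :=
  ∑ k ∈ Finset.univ.image c, ((clusterDeg G c k : ℝ) / (2 * (numEdges G : ℝ))) ^ 2

/-- Newman's modularity `Q_N = Q_f - Q_0`. -/
def QN (G : SimpleGraph V) (c : V → ℕ) : ℝ := Qf G c - Q0 G c

/-- The number of (nonempty) clusters of a labelling. -/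
def numClusters (c : V → ℕ) : ℕ := (Finset.univ.image c).card

/-- The unordered pairs of distinct nodes. -/
def offDiagPairs (V : Type*) [Fintype V] : Finset (Sym2 V) :=
  Finset.univ.filter (fun p => ¬ p.IsDiag)

/-- Number of node pairs in the same cluster under both clusterings. -/
def a11 (c1 c2 : V → ℕ) : ℕ :=
  ((offDiagPairs V).filter (fun p => sameCluster c1 p ∧ sameCluster c2 p)).card

/-- Number of node pairs in the same cluster under `c1` but not under `c2`. -/
def a10 (c1 c2 : V → ℕ) : ℕ :=
  ((offDiagPairs V).filter (fun p => sameCluster c1 p ∧ ¬ sameCluster c2 p)).card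

/-- Number of node pairs in the same cluster under `c2` but not under `c1`. -/
def a01 (c1 c2 : V → ℕ) : ℕ :=
  ((offDiagPairs V).filter (fun p => ¬ sameCluster c1 p ∧ sameCluster c2 p)).card

/-- The Jaccard similarity index of two clusterings. -/
def jaccard (c1 c2 : V → ℕ) : ℝ :=
  (a11 c1 c2 : ℝ) / ((a10 c1 c2 : ℝ) + (a01 c1 c2 : ℝ) + (a11 c1 c2 : ℝ))

/-- Number of (unordered) node pairs lying in the same cluster. -/
def samePairCount (c : V → ℕ) : ℕ :=
  ((offDiagPairs V).filter (fun p => sameCluster c p)).card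

/-- The nodes `0,…,n-1` are split into consecutive blocks of alternating sizes
`N₁,N₂,N₁,N₂,…`; `blockIdx N1 N2 v` is the index of the block of node `v`. -/
def blockIdx (N1 N2 v : ℕ) : ℕ :=
  2 * (v / (N1 + N2)) + (if v % (N1 + N2) < N1 then 0 else 1)

/-- The graph `G_{K,N₁,N₂}`: a disjoint union of `K` paths on `N₁` nodes and `K` paths on
`N₂` nodes, arranged as alternating consecutive blocks of `{0,…,K(N₁+N₂)-1}`. -/
def graphG (K N1 N2 : ℕ) : SimpleGraph (Fin (K * (N1 + N2))) where
  Adj u v := (u.val + 1 = v.val ∨ v.val + 1 = u.val) ∧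
             blockIdx N1 N2 u.val = blockIdx N1 N2 v.val
  symm := by constructor; rintro u v ⟨h1, h2⟩; exact ⟨h1.symm, h2.symm⟩
  loopless := by constructor; rintro u ⟨h1 | h1, -⟩ <;> omega

/-- The connected graph `H_{K,N₁,N₂}`: the path on all of `{0,…,K(N₁+N₂)-1}` together with,
inside each block, all chords joining nodes of the block at distance two. -/
def graphH (K N1 N2 : ℕ) : SimpleGraph (Fin (K * (N1 + N2))) where
  Adj u v := (u.val + 1 = v.val ∨ v.val + 1 = u.val) ∨
             ((u.val + 2 = v.val ∨ v.val + 2 = u.val) ∧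
              blockIdx N1 N2 u.val = blockIdx N1 N2 v.val)
  symm := by
    constructor
    rintro u v (h1 | ⟨h2, h3⟩)
    · exact Or.inl h1.symm
    · exact Or.inr ⟨h2.symm, h3.symm⟩
  loopless := by constructor; rintro u ((h | h) | ⟨h | h, -⟩) <;> omega

/-- The natural clustering `𝐕_{K,N₁,N₂}`: the clusters are the `2K` blocks. -/
def naturalLabel (N1 N2 : ℕ) {n : ℕ} : Fin n → ℕ := fun v => blockIdx N1 N2 v.val

/-- The balanced clustering `𝐔_{K,N₁,N₂,J}` with `L = ⌊n/J⌋`: clusters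
`U_j = {(j-1)L+1,…,jL}` for `j = 1,…,J`, plus the remainder cluster `U_{J+1}`. -/
def uLabel (J : ℕ) {n : ℕ} : Fin n → ℕ := fun v => min (v.val / (n / J)) J

end BadComm

open BadComm

/-!
Take `N₁ = N₂ = L²` and `J = 2KL`, so that `𝐔` cuts the nodes into intervals of length `L`.
The natural clustering cuts a path edge, so its edge fraction is below `1`, and it has `2K`
clusters, so by Cauchy–Schwarz its null-model term is at least `1/(2K)`.
The interval clustering cuts at most `8KL` of the at least `KL²` edges, and each of its clusters
has degree at most `4L`, so its modularity is at least `1 - 10/L`.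
All clusters of `𝐕` have size `L²` and all clusters of `𝐔` have size `L`; counting same-cluster
pairs as edges of a graph whose degrees are the cluster sizes minus one bounds the Jaccard
similarity by `(L - 1)/(L² - 1) = 1/(L + 1)`.
-/

theorem Nat.mod_le_one_of_div_ne {u v L : ℕ} (huv : u ≤ v) (hv : v ≤ u + 2)
    (h : u / L ≠ v / L) : v % L ≤ 1 := by
  by_contra! hr
  have hle : v / L * L ≤ u := by have := Nat.div_add_mod' v L; omega
  have hL : 0 < L := Nat.pos_of_ne_zero fun h0 => by simp [h0] at h
  exact h (le_antisymm (Nat.div_le_div_right huv) ((Nat.le_div_iff_mul_le hL).2 hle))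

namespace BadComm

open Finset

theorem sameCluster_mk_iff {V : Type*} {c : V → ℕ} {u v : V} :
    sameCluster c s(u, v) ↔ c u = c v := by
  refine ⟨fun h => h u (Sym2.mem_mk_left u v) v (Sym2.mem_mk_right u v), fun h x hx y hy => ?_⟩
  rcases Sym2.mem_iff.1 hx with rfl | rfl <;> rcases Sym2.mem_iff.1 hy with rfl | rfl
  all_goals first | rfl | exact h | exact h.symm

section Modularity

variable {V : Type*} [Fintype V]

theorem mem_edgeFin {G : SimpleGraph V} {e : Sym2 V} : e ∈ edgeFin G ↔ e ∈ G.edgeSet := by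
  simp [edgeFin]

theorem deg_eq_degree (G : SimpleGraph V) [DecidableRel G.Adj] (v : V) :
    deg G v = G.degree v := by
  rw [SimpleGraph.degree, SimpleGraph.neighborFinset_def]
  exact card_bij (fun w _ => w) (by simp) (by simp) (by simp)

theorem sum_deg (G : SimpleGraph V) : ∑ v, deg G v = 2 * numEdges G := by
  classical
  have hedges : edgeFin G = G.edgeFinset := by ext e; simp [mem_edgeFin]
  simp only [deg_eq_degree, numEdges, hedges, SimpleGraph.sum_degrees_eq_twice_card_edges]

theorem sum_clusterDeg (G : SimpleGraph V) (c : V → ℕ) :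
    ∑ k ∈ univ.image c, clusterDeg G c k = 2 * numEdges G := by
  rw [← sum_deg G]
  exact sum_fiberwise_of_maps_to (fun v _ => mem_image_of_mem c (mem_univ v)) _

theorem clusterDeg_le (G : SimpleGraph V) (c : V → ℕ) (k : ℕ) {d : ℕ}
    (hd : ∀ v, deg G v ≤ d) : clusterDeg G c k ≤ #{v | c v = k} * d := by
  unfold clusterDeg
  simpa using sum_le_sum fun v (_ : v ∈ ({v | c v = k} : Finset V)) => hd v

theorem Qf_eq_one_sub (G : SimpleGraph V) (c : V → ℕ) (hm : numEdges G ≠ 0) :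
    Qf G c = 1 - extraEdges G c / numEdges G := by
  have hsplit : intraEdges G c + extraEdges G c = numEdges G :=
    card_filter_add_card_filter_not _
  rw [Qf, eq_sub_iff_add_eq, ← add_div, div_eq_one_iff_eq (by exact_mod_cast hm)]
  exact_mod_cast hsplit

theorem sum_clusterDeg_div (G : SimpleGraph V) (c : V → ℕ) (hm : numEdges G ≠ 0) :
    ∑ k ∈ univ.image c, (clusterDeg G c k : ℝ) / (2 * numEdges G) = 1 := by
  rw [← sum_div, div_eq_one_iff_eq (by positivity)]
  exact_mod_cast sum_clusterDeg G c

/-- Cauchy–Schwarz, as the fractions `deg(Vₖ)/(2m)` sum to one. -/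
theorem inv_numClusters_le_Q0 (G : SimpleGraph V) (c : V → ℕ) (hm : numEdges G ≠ 0) :
    (numClusters c : ℝ)⁻¹ ≤ Q0 G c := by
  have hcs := sq_sum_le_card_mul_sum_sq (s := univ.image c)
    (f := fun k => (clusterDeg G c k : ℝ) / (2 * numEdges G))
  rw [sum_clusterDeg_div G c hm, one_pow] at hcs
  rcases (numClusters c).eq_zero_or_pos with h0 | hpos
  · rw [h0, Nat.cast_zero, inv_zero]
    exact sum_nonneg fun k _ => sq_nonneg _
  rw [inv_le_iff_one_le_mul₀' (by exact_mod_cast hpos)]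
  exact hcs

theorem Q0_le_of_clusterDeg_le (G : SimpleGraph V) (c : V → ℕ) (hm : numEdges G ≠ 0) {D : ℕ}
    (hD : ∀ v, clusterDeg G c (c v) ≤ D) : Q0 G c ≤ D / (2 * numEdges G) := by
  calc Q0 G c
      ≤ ∑ k ∈ univ.image c, D / (2 * numEdges G) * ((clusterDeg G c k : ℝ) / (2 * numEdges G)) := by
        refine sum_le_sum fun k hk => ?_
        obtain ⟨v, -, rfl⟩ := mem_image.1 hk
        rw [sq]
        gcongr
        exact_mod_cast hD v
    _ = D / (2 * numEdges G) := by rw [← mul_sum, sum_clusterDeg_div G c hm, mul_one]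

end Modularity

section PairCounting

variable {V : Type*} [Fintype V]

def sameClusterGraph (c : V → ℕ) : SimpleGraph V where
  Adj u v := u ≠ v ∧ c u = c v
  symm := ⟨fun _ _ h => ⟨h.1.symm, h.2.symm⟩⟩
  loopless := ⟨fun _ h => h.1 rfl⟩

theorem samePairCount_eq_numEdges (c : V → ℕ) :
    samePairCount c = numEdges (sameClusterGraph c) := by
  unfold samePairCount numEdges edgeFin offDiagPairs
  rw [filter_filter]
  congr 1
  ext p
  simp only [mem_filter, mem_univ, true_and]
  induction p using Sym2.ind with
  | _ u v => simp [sameCluster_mk_iff, sameClusterGraph]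

theorem deg_sameClusterGraph (c : V → ℕ) (v : V) :
    deg (sameClusterGraph c) v = #{w | c w = c v} - 1 := by
  have hv : v ∈ ({w | c w = c v} : Finset V) := by simp
  rw [← card_erase_of_mem hv, deg]
  congr 1
  ext w
  simp [sameClusterGraph, eq_comm, and_comm]

theorem two_mul_samePairCount_of_card_fiber (c : V → ℕ) {s : ℕ}
    (hs : ∀ v, #{w | c w = c v} = s) : 2 * samePairCount c = Fintype.card V * (s - 1) := by
  simp [samePairCount_eq_numEdges, ← sum_deg, deg_sameClusterGraph, hs]

theorem jaccard_le_div_samePairCount (c₁ c₂ : V → ℕ) :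
    jaccard c₁ c₂ ≤ (samePairCount c₂ : ℝ) / samePairCount c₁ := by
  have h11 : a11 c₁ c₂ ≤ samePairCount c₂ :=
    card_le_card (monotone_filter_right _ fun _ _ h => h.2)
  have hsplit : a10 c₁ c₂ + a11 c₁ c₂ = samePairCount c₁ := by
    unfold a10 a11 samePairCount
    rw [← filter_filter, ← filter_filter, add_comm]
    exact card_filter_add_card_filter_not _
  rcases (samePairCount c₁).eq_zero_or_pos with h0 | hpos
  · have : a11 c₁ c₂ = 0 := by omega
    simp [jaccard, this, h0]
  rw [jaccard]
  gcongr ?_ / ?_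
  · exact_mod_cast h11
  · exact_mod_cast (show samePairCount c₁ ≤ a10 c₁ c₂ + a01 c₁ c₂ + a11 c₁ c₂ by omega)

theorem jaccard_le_of_card_fiber (c₁ c₂ : V → ℕ) {s₁ s₂ : ℕ}
    (h₁ : ∀ v, #{w | c₁ w = c₁ v} = s₁) (h₂ : ∀ v, #{w | c₂ w = c₂ v} = s₂) :
    jaccard c₁ c₂ ≤ ((s₂ - 1 : ℕ) : ℝ) / (s₁ - 1 : ℕ) := by
  have hsp (c : V → ℕ) (s : ℕ) (hs : ∀ v, #{w | c w = c v} = s) :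
      (samePairCount c : ℝ) = Fintype.card V * (s - 1 : ℕ) / 2 := by
    rw [eq_div_iff two_ne_zero, mul_comm]
    exact_mod_cast two_mul_samePairCount_of_card_fiber c hs
  refine (jaccard_le_div_samePairCount c₁ c₂).trans ?_
  rw [hsp c₁ s₁ h₁, hsp c₂ s₂ h₂, div_div_div_cancel_right₀ two_ne_zero]
  rcases (Fintype.card V).eq_zero_or_pos with h0 | hpos
  · simp only [h0, Nat.cast_zero, zero_mul, zero_div]
    positivity
  · rw [mul_div_mul_left _ _ (by positivity)]

end PairCounting

section IntervalLabels

variable {n L : ℕ}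

theorem card_filter_div_eq (hL : L ∣ n) (v : Fin n) :
    #{w : Fin n | w.val / L = v.val / L} = L := by
  rcases L.eq_zero_or_pos with rfl | hL0
  · exact (Fin.pos v |>.ne' (Nat.eq_zero_of_zero_dvd hL)).elim
  set q := v.val / L
  have hq : (q + 1) * L ≤ n := by
    calc (q + 1) * L ≤ n / L * L := Nat.mul_le_mul_right _ (Nat.div_lt_div_of_lt_of_dvd hL v.isLt)
      _ = n := Nat.div_mul_cancel hL
  have hdiv (r : ℕ) (hr : r < L) : (q * L + r) / L = q ∧ (q * L + r) % L = r :=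
    ⟨Nat.div_eq_of_lt_le (by omega) (by rw [Nat.add_mul]; omega),
      by rw [Nat.mul_comm, Nat.mul_add_mod, Nat.mod_eq_of_lt hr]⟩
  refine (card_bij' (t := range L) (fun w _ => w.val % L)
    (fun r hr => (⟨q * L + r, ?_⟩ : Fin n)) ?_ ?_ ?_ ?_).trans (card_range L)
  · have := mem_range.1 hr; rw [Nat.add_mul] at hq; omega
  · intro w _; exact mem_range.2 (Nat.mod_lt _ hL0)
  · intro r hr; simp [(hdiv r (mem_range.1 hr)).1]
  · intro w hw
    have hw : w.val / L = q := (mem_filter.1 hw).2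
    have := Nat.div_add_mod' w.val L
    rw [hw] at this
    ext; simp only; omega
  · intro r hr; exact (hdiv r (mem_range.1 hr)).2

theorem numClusters_div_le (hL : L ∣ n) : numClusters (fun v : Fin n => v.val / L) ≤ n / L := by
  calc numClusters (fun v : Fin n => v.val / L) ≤ #(range (n / L)) :=
        card_le_card fun k hk => by
          obtain ⟨v, -, rfl⟩ := mem_image.1 hk
          exact mem_range.2 (Nat.div_lt_div_of_lt_of_dvd hL v.isLt)
    _ = n / L := card_range _

theorem uLabel_eq_div {J : ℕ} (hJ : 0 < J) (hn : n = J * L) (v : Fin n) :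
    uLabel J v = v.val / L := by
  have hnJ : n / J = L := by rw [hn, Nat.mul_div_cancel_left _ hJ]
  have hv : v.val / L < J := Nat.div_lt_of_lt_mul (by rw [Nat.mul_comm, ← hn]; exact v.isLt)
  rw [uLabel, hnJ, min_eq_left hv.le]

end IntervalLabels

theorem blockIdx_self (N v : ℕ) (hN : 0 < N) : blockIdx N N v = v / N := by
  have hv := Nat.div_add_mod v (2 * N)
  have hr := Nat.mod_lt v (show 0 < 2 * N by omega)
  rw [blockIdx, ← two_mul]
  generalize v / (2 * N) = q at *
  generalize v % (2 * N) = r at *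
  split_ifs with h
  · refine (Nat.div_eq_of_lt_le ?_ ?_).symm <;> nlinarith
  · refine (Nat.div_eq_of_lt_le ?_ ?_).symm <;> nlinarith

theorem naturalLabel_self {n N : ℕ} (hN : 0 < N) (v : Fin n) :
    naturalLabel N N v = v.val / N :=
  blockIdx_self N v hN

section GraphH

variable {K N₁ N₂ : ℕ}

theorem graphH_adj {u v : Fin (K * (N₁ + N₂))} :
    (graphH K N₁ N₂).Adj u v ↔ (u.val + 1 = v.val ∨ v.val + 1 = u.val) ∨
      ((u.val + 2 = v.val ∨ v.val + 2 = u.val) ∧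
        blockIdx N₁ N₂ u.val = blockIdx N₁ N₂ v.val) :=
  Iff.rfl

theorem deg_graphH_le_four (v : Fin (K * (N₁ + N₂))) : deg (graphH K N₁ N₂) v ≤ 4 := by
  calc deg (graphH K N₁ N₂) v ≤ #({0, 1, 3, 4} : Finset ℕ) := by
        refine card_le_card_of_injOn (fun w => w.val + 2 - v.val) (fun w hw => ?_) ?_
        · have := graphH_adj.1 (mem_filter.1 hw).2
          simp only [coe_insert, coe_singleton, Set.mem_insert_iff, Set.mem_singleton_iff]
          omega
        · intro w hw w' hw' h
          have := graphH_adj.1 (mem_filter.1 hw).2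
          have := graphH_adj.1 (mem_filter.1 hw').2
          simp only at h
          ext; omega
    _ = 4 := rfl

theorem one_le_deg_graphH (hn : 2 ≤ K * (N₁ + N₂)) (v : Fin (K * (N₁ + N₂))) :
    1 ≤ deg (graphH K N₁ N₂) v := by
  rw [Nat.one_le_iff_ne_zero, deg, Ne, card_eq_zero, ← Ne, ← nonempty_iff_ne_empty]
  by_cases hv : v.val + 1 < K * (N₁ + N₂)
  · exact ⟨⟨v.val + 1, hv⟩, by simp [graphH_adj]⟩
  · exact ⟨⟨v.val - 1, by omega⟩, by simp only [mem_filter, mem_univ, true_and, graphH_adj]; omega⟩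

theorem card_le_two_mul_numEdges_graphH (hn : 2 ≤ K * (N₁ + N₂)) :
    K * (N₁ + N₂) ≤ 2 * numEdges (graphH K N₁ N₂) := by
  rw [← sum_deg]
  simpa using card_nsmul_le_sum univ _ 1 fun v _ => one_le_deg_graphH hn v

theorem exists_eq_mk_of_mem_edgeFin_graphH {e : Sym2 (Fin (K * (N₁ + N₂)))}
    (he : e ∈ edgeFin (graphH K N₁ N₂)) :
    ∃ u v, e = s(u, v) ∧ u < v ∧ v.val ≤ u.val + 2 := by
  induction e using Sym2.ind with
  | _ a b =>
    have hab := graphH_adj.1 ((SimpleGraph.mem_edgeSet _).1 (mem_edgeFin.1 he))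
    rcases lt_or_gt_of_ne (a := a) (b := b) (fun h => by subst h; omega) with h | h
    · exact ⟨a, b, rfl, h, by omega⟩
    · exact ⟨b, a, Sym2.eq_swap, h, by omega⟩

/-- An edge of `H` crosses a boundary `qL` only if its upper end is `qL` or `qL + 1`. -/
theorem extraEdges_graphH_div_le {L : ℕ} (hL : L ∣ K * (N₁ + N₂)) :
    extraEdges (graphH K N₁ N₂) (fun v => v.val / L) ≤ 4 * (K * (N₁ + N₂) / L) := by
  set n := K * (N₁ + N₂)
  set T : Finset (Fin n × Fin n) := {p | p.1 < p.2 ∧ p.2.val ≤ p.1.val + 2 ∧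
    p.1.val / L ≠ p.2.val / L}
  have hsub : (edgeFin (graphH K N₁ N₂)).filter (¬ sameCluster (fun v : Fin n => v.val / L) ·) ⊆
      T.image fun p => s(p.1, p.2) := by
    intro e he
    obtain ⟨he, hcross⟩ := mem_filter.1 he
    obtain ⟨u, v, rfl, huv, hv⟩ := exists_eq_mk_of_mem_edgeFin_graphH he
    exact mem_image.2 ⟨(u, v), by simpa [T, huv, hv] using sameCluster_mk_iff.not.1 hcross, rfl⟩
  calc extraEdges (graphH K N₁ N₂) (fun v => v.val / L) ≤ #T :=
        (card_le_card hsub).trans card_image_le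
    _ ≤ #(range (n / L) ×ˢ range 2 ×ˢ range 2) := by
        refine card_le_card_of_injOn (fun p => (p.2.val / L, p.2.val % L, p.2.val - p.1.val - 1))
          (fun p hp => ?_) (fun p hp p' hp' h => ?_)
        · obtain ⟨hlt, hle, hne⟩ := mem_filter.1 hp |>.2
          have hlt : p.1.val < p.2.val := hlt
          simp only [coe_product, coe_range, Set.mem_prod, Set.mem_Iio]
          exact ⟨Nat.div_lt_div_of_lt_of_dvd hL p.2.isLt,
            by have := Nat.mod_le_one_of_div_ne hlt.le hle hne; omega, by omega⟩
        · obtain ⟨hlt, -⟩ := mem_filter.1 hp |>.2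
          obtain ⟨hlt', -⟩ := mem_filter.1 hp' |>.2
          have hlt : p.1.val < p.2.val := hlt
          have hlt' : p'.1.val < p'.2.val := hlt'
          simp only [Prod.mk.injEq] at h
          obtain ⟨hq, hr, hd⟩ := h
          have h2 : p.2.val = p'.2.val := by
            rw [← Nat.div_add_mod' p.2.val L, ← Nat.div_add_mod' p'.2.val L, hq, hr]
          exact Prod.ext (Fin.ext (by omega)) (Fin.ext h2)
    _ = 4 * (n / L) := by simp only [card_product, card_range]; ring

theorem one_le_extraEdges_graphH_naturalLabel (hK : 1 ≤ K) (hN₁ : 0 < N₁) (hN₂ : 0 < N₂) :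
    1 ≤ extraEdges (graphH K N₁ N₂) (naturalLabel N₁ N₂) := by
  have hN : N₁ < K * (N₁ + N₂) := by nlinarith
  rw [Nat.one_le_iff_ne_zero, extraEdges, Ne, card_eq_zero, ← Ne, ← nonempty_iff_ne_empty]
  refine ⟨s(⟨N₁ - 1, by omega⟩, ⟨N₁, hN⟩), mem_filter.2 ⟨?_, ?_⟩⟩
  · exact mem_edgeFin.2 (graphH_adj.2 (Or.inl (Or.inl (by simp only; omega))))
  · have hlt : N₁ - 1 < N₁ + N₂ := by omega
    rw [sameCluster_mk_iff]
    simp [naturalLabel, blockIdx, Nat.div_eq_of_lt, Nat.mod_eq_of_lt, hlt, hN₁, hN₂]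

end GraphH

section Specialization

variable {K L : ℕ}

theorem naturalLabel_eq_div {N : ℕ} (hN : 0 < N) :
    (naturalLabel N N : Fin (K * (N + N)) → ℕ) = fun v => v.val / N :=
  funext (naturalLabel_self hN)

theorem QN_graphH_naturalLabel_lt (hK : 1 ≤ K) {N : ℕ} (hN : 0 < N) :
    QN (graphH K N N) (naturalLabel N N) < 1 - 1 / (2 * (K : ℝ)) := by
  have hn : 2 ≤ K * (N + N) := by nlinarith
  have hm : numEdges (graphH K N N) ≠ 0 := by
    have := card_le_two_mul_numEdges_graphH hn; omega
  have hextra :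
      (0 : ℝ) < extraEdges (graphH K N N) (naturalLabel N N) / numEdges (graphH K N N) := by
    have := one_le_extraEdges_graphH_naturalLabel hK hN hN
    positivity
  have hclusters : numClusters (naturalLabel N N : Fin (K * (N + N)) → ℕ) ≤ 2 * K := by
    rw [naturalLabel_eq_div hN]
    refine (numClusters_div_le ⟨2 * K, by ring⟩).trans_eq ?_
    rw [show K * (N + N) = N * (2 * K) by ring, Nat.mul_div_cancel_left _ hN]
  have hQ0 : 1 / (2 * (K : ℝ)) ≤ Q0 (graphH K N N) (naturalLabel N N) := by
    refine le_trans ?_ (inv_numClusters_le_Q0 _ _ hm)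
    rw [one_div]
    gcongr
    · have : Nonempty (Fin (K * (N + N))) := ⟨⟨0, by omega⟩⟩
      exact_mod_cast card_pos.2 (univ_nonempty.image _)
    · exact_mod_cast hclusters
  rw [QN, Qf_eq_one_sub _ _ hm]
  linarith

theorem uLabel_two_mul_eq_div (hK : 0 < K) (hL : 0 < L) :
    (uLabel (2 * K * L) : Fin (K * (L * L + L * L)) → ℕ) = fun v => v.val / L :=
  funext (uLabel_eq_div (by positivity) (by ring))

theorem one_sub_ten_div_le_QN_graphH_uLabel (hK : 1 ≤ K) (hL : 0 < L) :
    1 - 10 / (L : ℝ) ≤ QN (graphH K (L * L) (L * L)) (uLabel (2 * K * L)) := by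
  set G := graphH K (L * L) (L * L)
  set m := numEdges G
  have hdvd : L ∣ K * (L * L + L * L) := ⟨2 * K * L, by ring⟩
  have hnL : K * (L * L + L * L) / L = 2 * K * L := by
    rw [show K * (L * L + L * L) = L * (2 * K * L) by ring, Nat.mul_div_cancel_left _ hL]
  have hm : K * (L * L + L * L) ≤ 2 * m := card_le_two_mul_numEdges_graphH (by nlinarith)
  have hm0 : m ≠ 0 := by nlinarith
  have hmR : (K : ℝ) * L * L ≤ m := by
    have : ((K * (L * L + L * L) : ℕ) : ℝ) ≤ 2 * m := by exact_mod_cast hm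
    push_cast at this; linarith
  have hextra : (extraEdges G (uLabel (2 * K * L)) : ℝ) / m ≤ 8 * K * L / m := by
    have := extraEdges_graphH_div_le (N₂ := L * L) hdvd
    rw [hnL, ← uLabel_two_mul_eq_div hK hL] at this
    gcongr
    exact_mod_cast this.trans_eq (by ring)
  have hQ0 : Q0 G (uLabel (2 * K * L)) ≤ 2 * L / m := by
    refine (Q0_le_of_clusterDeg_le G _ hm0 (D := L * 4) fun v => ?_).trans_eq ?_
    · refine (clusterDeg_le G _ _ deg_graphH_le_four).trans_eq ?_
      rw [uLabel_two_mul_eq_div hK hL, card_filter_div_eq hdvd]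
    · change ((L * 4 : ℕ) : ℝ) / (2 * (m : ℝ)) = _
      push_cast; field_simp; ring
  have hsum : 8 * K * L / (m : ℝ) + 2 * L / m ≤ 10 / L := by
    have hKR : (1 : ℝ) ≤ K := by exact_mod_cast hK
    rw [← add_div, div_le_div_iff₀ (by positivity) (by positivity)]
    nlinarith
  rw [QN, Qf_eq_one_sub _ _ hm0]
  linarith

theorem jaccard_naturalLabel_uLabel_le (hK : 0 < K) (hL : 0 < L) :
    jaccard (naturalLabel (L * L) (L * L) : Fin (K * (L * L + L * L)) → ℕ) (uLabel (2 * K * L))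
      ≤ 1 / (L + 1) := by
  have hL2 : 0 < L * L := by positivity
  refine (jaccard_le_of_card_fiber _ _ (s₁ := L * L) (s₂ := L) ?_ ?_).trans ?_
  · rw [naturalLabel_eq_div hL2]
    exact card_filter_div_eq ⟨2 * K, by ring⟩
  · rw [uLabel_two_mul_eq_div hK hL]
    exact card_filter_div_eq ⟨2 * K * L, by ring⟩
  · have hfactor : L * L - 1 = (L + 1) * (L - 1) := Nat.mul_self_sub_mul_self_eq L 1
    rw [hfactor, Nat.cast_mul, mul_comm]
    rcases (L - 1).eq_zero_or_pos with h0 | hpos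
    · simp only [h0, Nat.cast_zero, zero_div]; positivity
    · rw [div_mul_cancel_left₀ (by positivity), one_div]; push_cast; rfl

end Specialization

end BadComm

/-- Theorem 6 of the paper: for every `K ≥ 1` and `ε ∈ (0, 1/(2K))`
there are `N₁, N₂ ≥ 5` and `1 ≤ J ≤ K(N₁+N₂)` with
`Q_N(𝐕, H) < 1 − 1/(2K) < 1 − ε < Q_N(𝐔, H)` and `S(𝐕,𝐔) < ε`. -/
theorem statement18 (K : ℕ) (hK : 1 ≤ K) (ε : ℝ) (hε0 : 0 < ε) (hε1 : ε < 1 / (2 * (K : ℝ))) :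
    ∃ N1 N2 J : ℕ, 5 ≤ N1 ∧ 5 ≤ N2 ∧ 1 ≤ J ∧ J ≤ K * (N1 + N2) ∧
      QN (graphH K N1 N2) (naturalLabel N1 N2) < 1 - 1 / (2 * (K : ℝ)) ∧
      (1 : ℝ) - 1 / (2 * (K : ℝ)) < 1 - ε ∧
      1 - ε < QN (graphH K N1 N2) (uLabel J) ∧
      jaccard (naturalLabel N1 N2 : Fin (K * (N1 + N2)) → ℕ) (uLabel J) < ε := by
  obtain ⟨L, hL⟩ := exists_nat_gt (max 5 (10 / ε))
  have hL5 : 5 < L := by exact_mod_cast (le_max_left _ _).trans_lt hL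
  have hLpos : (0 : ℝ) < L := by positivity
  have h10 : 10 / (L : ℝ) < ε := by
    rw [div_lt_comm₀ hLpos hε0]; exact (le_max_right _ _).trans_lt hL
  have hJ : 2 * K * L ≤ K * (L * L + L * L) :=
    calc 2 * K * L ≤ 2 * K * (L * L) := Nat.mul_le_mul_left _ (Nat.le_mul_self L)
      _ = K * (L * L + L * L) := by ring
  have hU := one_sub_ten_div_le_QN_graphH_uLabel (K := K) hK (by omega : 0 < L)
  have hS := jaccard_naturalLabel_uLabel_le (K := K) hK (by omega : 0 < L)
  refine ⟨L * L, L * L, 2 * K * L, by nlinarith, by nlinarith, by nlinarith, hJ,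
    QN_graphH_naturalLabel_lt hK (by positivity), by linarith, by linarith, hS.trans_lt ?_⟩
  calc 1 / ((L : ℝ) + 1) < 10 / L := by rw [div_lt_div_iff₀ (by positivity) hLpos]; linarith
    _ < ε := h10
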